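/- Let g be the Lie algebra A_{4,2}^{−1}. Define r : g* → g by r(ε1) = e3, r(ε2) = −e4, r(ε3) = −e1, r(ε4) = e2 (the 2-vector e1∧e3 − e2∧e4). Then r is a bijective skew-symmetric solution of the CYBE, and for all real numbers n1, n2, n3, n4, the endomorphism n defined by n(e1) = n1·e1 + n2·e2, n(e2) = n3·e2, n(e3) = n4·e2 + n1·e3, n(e4) = n4·e1 − n2·e3 + n3·e4 makes (r, n) an r-n structure on g. -/

import Mathlib

noncomputable section

open Module

variable {g : Type*} [LieRing g] [LieAlgebra ℝ g]

/-- The coadjoint operator: `(coad X α) Y = -α ⁅X, Y⁆`. -/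
def coad (X : g) : Module.Dual ℝ g →ₗ[ℝ] Module.Dual ℝ g :=
  -(LieAlgebra.ad ℝ g X).dualMap

/-- A linear map `r : g* → g` is skew-symmetric if `α (r β) = -β (r α)`. -/
def IsSkew (r : Module.Dual ℝ g →ₗ[ℝ] g) : Prop :=
  ∀ α β : Module.Dual ℝ g, α (r β) = -β (r α)

/-- The Sklyanin bracket on `g*` defined by `r`. -/
def sklyanin (r : Module.Dual ℝ g →ₗ[ℝ] g) (α β : Module.Dual ℝ g) : Module.Dual ℝ g :=
  coad (r α) β - coad (r β) α

/-- `r` is a solution of the classical Yang-Baxter equation. -/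
def IsCYBE (r : Module.Dual ℝ g →ₗ[ℝ] g) : Prop :=
  ∀ α β : Module.Dual ℝ g, r (sklyanin r α β) = ⁅r α, r β⁆

/-- `n : g → g` is a Nijenhuis operator. -/
def IsNijenhuis (n : g →ₗ[ℝ] g) : Prop :=
  ∀ X Y : g, ⁅n X, n Y⁆ - n ⁅n X, Y⁆ - n ⁅X, n Y⁆ + n (n ⁅X, Y⁆) = 0

/-- `(r, n)` is an r-n structure on `g`. -/
def IsRN (r : Module.Dual ℝ g →ₗ[ℝ] g) (n : g →ₗ[ℝ] g) : Prop :=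
  IsSkew r ∧ IsCYBE r ∧ IsNijenhuis n ∧
    (∀ α : Module.Dual ℝ g, n (r α) = r (n.dualMap α)) ∧
    ∀ α β : Module.Dual ℝ g,
      coad (r α) (n.dualMap β) - coad (r β) (n.dualMap α)
        - n.dualMap (coad (r α) β) + n.dualMap (coad (r β) α) = 0

/-- The Nijenhuis concomitant of two endomorphisms. -/
def nijConcomitant (n' n : g →ₗ[ℝ] g) (X Y : g) : g :=
  ⁅n' X, n Y⁆ + ⁅n X, n' Y⁆ - n' ⁅n X, Y⁆ - n' ⁅X, n Y⁆ - n ⁅n' X, Y⁆ - n ⁅X, n' Y⁆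
    + n' (n ⁅X, Y⁆) + n (n' ⁅X, Y⁆)

/-- The underlying space of the Lie algebra `A42`: `ℝ⁴`. -/
def A42 : Type := Fin 4 → ℝ

instance : AddCommGroup A42 := inferInstanceAs (AddCommGroup (Fin 4 → ℝ))
instance : Module ℝ A42 := inferInstanceAs (Module ℝ (Fin 4 → ℝ))

namespace A42

@[simp] theorem add_apply (x y : A42) (i : Fin 4) : (x + y) i = x i + y i := rfl
@[simp] theorem smul_apply (c : ℝ) (x : A42) (i : Fin 4) : (c • x) i = c * x i := rfl
@[simp] theorem neg_apply (x : A42) (i : Fin 4) : (-x) i = -(x i) := rfl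
@[simp] theorem sub_apply (x y : A42) (i : Fin 4) : (x - y) i = x i - y i := rfl
@[simp] theorem zero_apply (i : Fin 4) : (0 : A42) i = 0 := rfl

/-- The bracket of `A42`. -/
def br (x y : A42) : A42 := fun i =>
  if i = 0 then -(x 0 * y 3 - x 3 * y 0)
  else if i = 1 then (x 1 * y 3 - x 3 * y 1) + (x 2 * y 3 - x 3 * y 2)
  else if i = 2 then x 2 * y 3 - x 3 * y 2
  else 0

@[simp] theorem br_apply (x y : A42) (i : Fin 4) :
    br x y i = if i = 0 then -(x 0 * y 3 - x 3 * y 0)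
      else if i = 1 then (x 1 * y 3 - x 3 * y 1) + (x 2 * y 3 - x 3 * y 2)
      else if i = 2 then x 2 * y 3 - x 3 * y 2
      else 0 := rfl

instance : LieRing A42 where
  bracket := br
  add_lie x y z := by funext i; show br (x + y) z i = (br x z + br y z) i; simp; split_ifs <;> ring
  lie_add x y z := by funext i; show br x (y + z) i = (br x y + br x z) i; simp; split_ifs <;> ring
  lie_self x := by funext i; show br x x i = (0 : A42) i; simp; split_ifs <;> ring
  leibniz_lie x y z := by
    funext i; show br x (br y z) i = (br (br x y) z + br y (br x z)) i
    simp; split_ifs <;> ring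

instance : LieAlgebra ℝ A42 where
  lie_smul c x y := by
    funext i; show br x (c • y) i = (c • br x y) i; simp; split_ifs <;> ring

/-- Basis vectors `e1, e2, e3, e4` (zero-indexed). -/
def e (i : Fin 4) : A42 := fun j => if j = i then 1 else 0

/-- Dual basis `ε1, ε2, ε3, ε4` (zero-indexed). -/
def eps (i : Fin 4) : Module.Dual ℝ A42 where
  toFun x := x i
  map_add' _ _ := rfl
  map_smul' _ _ := rfl

end A42

/-!
A linear map is pinned down by its values on a basis, so `r` and `n` are the explicit maps
`rMap = e₁ ∧ e₃ - e₂ ∧ e₄` and `nMap`. Skew-symmetry is inherited from the wedges. Every other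
identity becomes, once covectors are written in the dual basis, a polynomial identity in the
coordinates, checked componentwise.
-/

section Wedge

variable {R M : Type*} [CommRing R] [AddCommGroup M] [Module R M]

def wedge (x y : M) : Module.Dual R M →ₗ[R] M :=
  (Module.Dual.eval R M x).smulRight y - (Module.Dual.eval R M y).smulRight x

@[simp]
theorem wedge_apply (x y : M) (α : Module.Dual R M) : wedge x y α = α x • y - α y • x :=
  rfl

end Wedge

theorem isSkew_wedge (x y : g) : IsSkew (wedge x y) := by
  intro α β
  simp only [wedge_apply, map_sub, map_smul, smul_eq_mul]
  ring

theorem IsSkew.sub {r s : Module.Dual ℝ g →ₗ[ℝ] g} (hr : IsSkew r) (hs : IsSkew s) :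
    IsSkew (r - s) := by
  intro α β
  simp only [LinearMap.sub_apply, map_sub, hr α β, hs α β]
  ring

namespace A42

@[simp] theorem eps_apply (i : Fin 4) (x : A42) : eps i x = x i := rfl

@[simp] theorem e_apply (i j : Fin 4) : e i j = if j = i then 1 else 0 := rfl

@[simp] theorem lie_apply (x y : A42) (i : Fin 4) : ⁅x, y⁆ i = br x y i := rfl

def stdBasis : Basis (Fin 4) ℝ A42 := Pi.basisFun ℝ (Fin 4)

@[simp]
theorem stdBasis_apply (i : Fin 4) : stdBasis i = e i := by
  funext j
  exact (congrFun (Pi.basisFun_apply ℝ (Fin 4) i) j).trans (Pi.single_apply i 1 j)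

@[simp]
theorem dualBasis_stdBasis (i : Fin 4) : stdBasis.dualBasis i = eps i :=
  stdBasis.ext fun j => by
    rw [Basis.dualBasis_apply_self, stdBasis_apply, eps_apply, e_apply]
    simp only [eq_comm]

theorem exists_eq_sum_eps (α : Module.Dual ℝ A42) : ∃ a : Fin 4 → ℝ, α = ∑ i, a i • eps i :=
  ⟨_, by simpa using (stdBasis.dualBasis.sum_repr α).symm⟩

def rMap : Module.Dual ℝ A42 →ₗ[ℝ] A42 := wedge (e 0) (e 2) - wedge (e 1) (e 3)

def nMap (n1 n2 n3 n4 : ℝ) : A42 →ₗ[ℝ] A42 :=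
  LinearMap.pi ![n1 • eps 0 + n4 • eps 3, n2 • eps 0 + n3 • eps 1 + n4 • eps 2,
    n1 • eps 2 - n2 • eps 3, n3 • eps 3]

@[simp]
theorem nMap_apply (n1 n2 n3 n4 : ℝ) (x : A42) (i : Fin 4) :
    nMap n1 n2 n3 n4 x i =
      (![n1 • eps 0 + n4 • eps 3, n2 • eps 0 + n3 • eps 1 + n4 • eps 2,
        n1 • eps 2 - n2 • eps 3, n3 • eps 3] : Fin 4 → Module.Dual ℝ A42) i x :=
  rfl

theorem eq_rMap {r : Module.Dual ℝ A42 →ₗ[ℝ] A42} (h1 : r (eps 0) = e 2) (h2 : r (eps 1) = -e 3)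
    (h3 : r (eps 2) = -e 0) (h4 : r (eps 3) = e 1) : r = rMap :=
  stdBasis.dualBasis.ext fun i => by
    fin_cases i <;> simp [rMap, h1, h2, h3, h4]

theorem eq_nMap {n1 n2 n3 n4 : ℝ} {n : A42 →ₗ[ℝ] A42}
    (h1 : n (e 0) = n1 • e 0 + n2 • e 1) (h2 : n (e 1) = n3 • e 1)
    (h3 : n (e 2) = n4 • e 1 + n1 • e 2) (h4 : n (e 3) = n4 • e 0 - n2 • e 2 + n3 • e 3) :
    n = nMap n1 n2 n3 n4 :=
  stdBasis.ext fun i => by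
    funext j
    fin_cases i <;> fin_cases j <;> simp [h1, h2, h3, h4]

theorem isSkew_rMap : IsSkew rMap := (isSkew_wedge _ _).sub (isSkew_wedge _ _)

theorem bijective_rMap : Function.Bijective rMap := by
  refine Function.bijective_iff_has_inverse.mpr
    ⟨fun x => x 2 • eps 0 - x 3 • eps 1 - x 0 • eps 2 + x 1 • eps 3, fun α => ?_, fun x => ?_⟩
  · obtain ⟨a, rfl⟩ := exists_eq_sum_eps α
    ext x
    simp [rMap, Fin.sum_univ_four]
  · funext i
    fin_cases i <;> simp [rMap]

theorem isCYBE_rMap : IsCYBE rMap := by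
  intro α β
  obtain ⟨a, rfl⟩ := exists_eq_sum_eps α
  obtain ⟨b, rfl⟩ := exists_eq_sum_eps β
  funext i
  fin_cases i <;> simp [rMap, sklyanin, coad, Fin.sum_univ_four] <;> ring

theorem isNijenhuis_nMap (n1 n2 n3 n4 : ℝ) : IsNijenhuis (nMap n1 n2 n3 n4) := by
  intro x y
  funext i
  fin_cases i <;> simp <;> ring

theorem nMap_rMap (n1 n2 n3 n4 : ℝ) (α : Module.Dual ℝ A42) :
    nMap n1 n2 n3 n4 (rMap α) = rMap ((nMap n1 n2 n3 n4).dualMap α) := by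
  obtain ⟨a, rfl⟩ := exists_eq_sum_eps α
  funext i
  fin_cases i <;> simp [rMap, Fin.sum_univ_four] <;> ring

theorem concomitant_rMap_nMap (n1 n2 n3 n4 : ℝ) (α β : Module.Dual ℝ A42) :
    coad (rMap α) ((nMap n1 n2 n3 n4).dualMap β) - coad (rMap β) ((nMap n1 n2 n3 n4).dualMap α)
      - (nMap n1 n2 n3 n4).dualMap (coad (rMap α) β)
      + (nMap n1 n2 n3 n4).dualMap (coad (rMap β) α) = 0 := by
  obtain ⟨a, rfl⟩ := exists_eq_sum_eps α
  obtain ⟨b, rfl⟩ := exists_eq_sum_eps β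
  ext x
  simp [rMap, coad, Fin.sum_univ_four]
  ring

theorem isRN_rMap_nMap (n1 n2 n3 n4 : ℝ) : IsRN rMap (nMap n1 n2 n3 n4) :=
  ⟨isSkew_rMap, isCYBE_rMap, isNijenhuis_nMap n1 n2 n3 n4, nMap_rMap n1 n2 n3 n4,
    concomitant_rMap_nMap n1 n2 n3 n4⟩

end A42

open A42 in
/-- On the Lie algebra `A_{4,2}^{-1}` (bracket `[e1,e4] = -e1`,
`[e2,e4] = e2`, `[e3,e4] = e2 + e3`), the map `r` with `r(ε1) = e3`, `r(ε2) = -e4`,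
`r(ε3) = -e1`, `r(ε4) = e2` (the 2-vector `e1∧e3 - e2∧e4`) is a bijective skew-symmetric
solution of the CYBE, and for all reals `n1, n2, n3, n4`, the endomorphism `n` with
`n(e1) = n1·e1 + n2·e2`, `n(e2) = n3·e2`, `n(e3) = n4·e2 + n1·e3`,
`n(e4) = n4·e1 - n2·e3 + n3·e4` makes `(r, n)` an r-n structure on `g`. -/
theorem a42_r_and_rn
    (r : Module.Dual ℝ A42 →ₗ[ℝ] A42)
    (h1 : r (eps 0) = e 2) (h2 : r (eps 1) = -e 3)
    (h3 : r (eps 2) = -e 0) (h4 : r (eps 3) = e 1) :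
    (IsSkew r ∧ Function.Bijective r ∧ IsCYBE r) ∧
    ∀ (n1 n2 n3 n4 : ℝ) (n : A42 →ₗ[ℝ] A42),
      n (e 0) = n1 • e 0 + n2 • e 1 →
      n (e 1) = n3 • e 1 →
      n (e 2) = n4 • e 1 + n1 • e 2 →
      n (e 3) = n4 • e 0 - n2 • e 2 + n3 • e 3 →
      IsRN r n := by
  obtain rfl := eq_rMap h1 h2 h3 h4
  refine ⟨⟨isSkew_rMap, bijective_rMap, isCYBE_rMap⟩, ?_⟩
  intro n1 n2 n3 n4 n hn1 hn2 hn3 hn4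
  obtain rfl := eq_nMap hn1 hn2 hn3 hn4
  exact isRN_rMap_nMap n1 n2 n3 n4
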